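/- arXiv:1612.03756 — 7 statements merged into one kernel-verified Lean document; each statement's English description precedes it below -/
import Mathlib

section
/- Let f : ℝ → ℂ be continuous and suppose Δ_y^{m+1} f = 0 for all y ∈ ℝ, i.e., Σ_{p=0}^{m+1} binom(m+1,p)(−1)^{m+1−p} f(x + p y) = 0 for all x, y ∈ ℝ. Then f is a polynomial of degree at most m. -/
open Finset Polynomial


lemma frechet_hasse_const (P : Polynomial ℂ) (n : ℕ) (h : P.natDegree ≤ n + 1) :
    Polynomial.hasseDeriv (n+1) P = Polynomial.C (P.coeff (n+1)) := by
  ext k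
  rw [Polynomial.hasseDeriv_coeff]
  cases k with
  | zero => simp
  | succ j =>
    rw [Polynomial.coeff_C]
    simp only [Nat.succ_ne_zero, if_false]
    have hz : P.coeff (j + 1 + (n+1)) = 0 :=
      Polynomial.coeff_eq_zero_of_natDegree_lt (by omega)
    simp [hz]

lemma frechet_deg_drop (P : Polynomial ℂ) (y : ℂ) (n : ℕ) (h : P.natDegree ≤ n + 1) :
    (Polynomial.taylor y P - P).natDegree ≤ n := by
  apply Polynomial.natDegree_le_iff_coeff_eq_zero.mpr
  intro k hk
  rw [Polynomial.coeff_sub]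
  by_cases hE : k = n + 1
  · subst hE
    rw [Polynomial.taylor_coeff, frechet_hasse_const P n h]
    simp
  · have h1 : P.natDegree < k := by omega
    rw [Polynomial.coeff_eq_zero_of_natDegree_lt h1,
      Polynomial.coeff_eq_zero_of_natDegree_lt (by rwa [Polynomial.natDegree_taylor])]
    ring


lemma frechet_pascal (m : ℕ) (h : ℕ → ℂ) :
    ∑ p ∈ range (m+1), (m.choose p : ℂ) * (-1)^(m-p) * (h (p+1) - h p)
      = ∑ p ∈ range (m+2), ((m+1).choose p : ℂ) * (-1)^(m+1-p) * h p := by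
  -- expand RHS by peeling the p = 0 term
  rw [Finset.sum_range_succ'
    (fun p => ((m+1).choose p : ℂ) * (-1)^(m+1-p) * h p) (m+1)]
  simp only [Nat.choose_zero_right, Nat.cast_one, one_mul, Nat.sub_zero, Nat.cast_pow]
  -- RHS = Σ_{p∈range(m+1)} C(m+1,p+1)(-1)^(m-p) h(p+1) + (-1)^(m+1) h 0
  have hterm : ∀ p, ((m+1).choose (p+1) : ℂ) * (-1)^(m+1-(p+1)) * h (p+1)
      = (m.choose p : ℂ) * (-1)^(m-p) * h (p+1)
        + (m.choose (p+1) : ℂ) * (-1)^(m-p) * h (p+1) := by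
    intro p
    rw [Nat.choose_succ_succ, Nat.succ_sub_succ]
    push_cast
    ring
  simp only [hterm]
  rw [Finset.sum_add_distrib]
  -- now show LHS = A + B + (-1)^(m+1) h 0 where
  -- A = Σ choose(m,p)(-1)^(m-p) h(p+1), B = Σ choose(m,p+1)(-1)^(m-p) h(p+1)
  have hsub : ∀ p, (m.choose p : ℂ) * (-1)^(m-p) * (h (p+1) - h p)
      = (m.choose p : ℂ) * (-1)^(m-p) * h (p+1) - (m.choose p : ℂ) * (-1)^(m-p) * h p := by
    intro p; ring
  simp only [hsub]
  rw [Finset.sum_sub_distrib]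
  -- reduces to : -Σ_{p∈range(m+1)} choose(m,p)(-1)^(m-p) h p
  --            = Σ_{p∈range(m+1)} choose(m,p+1)(-1)^(m-p) h(p+1) + (-1)^(m+1) h 0
  have key : ∑ p ∈ range (m+1), (m.choose p : ℂ) * (-1)^(m-p) * h p
      = -(∑ p ∈ range (m+1), (m.choose (p+1) : ℂ) * (-1)^(m-p) * h (p+1)
          + (-1 : ℂ)^(m+1) * h 0) := by
    rw [Finset.sum_range_succ' (fun p => (m.choose p : ℂ) * (-1)^(m-p) * h p) m]
    rw [Finset.sum_range_succ (fun p => (m.choose (p+1) : ℂ) * (-1)^(m-p) * h (p+1)) m]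
    rw [Nat.choose_succ_self]
    have h2 : ∀ p ∈ range m, (m.choose (p+1) : ℂ) * (-1)^(m-(p+1)) * h (p+1)
        = -((m.choose (p+1) : ℂ) * (-1)^(m-p) * h (p+1)) := by
      intro p hp
      rw [Finset.mem_range] at hp
      have : m - p = (m - (p+1)) + 1 := by omega
      rw [this]
      ring
    rw [Finset.sum_congr rfl h2, Finset.sum_neg_distrib]
    simp only [Nat.choose_zero_right, Nat.cast_one, one_mul, Nat.sub_zero, Nat.cast_zero,
      zero_mul, add_zero]
    rw [pow_succ]
    ring
  rw [key]
  ring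

lemma frechet_polyD (m : ℕ) (P : Polynomial ℂ) (hP : P.natDegree ≤ m) (x y : ℂ) :
    ∑ p ∈ range (m+2), ((m+1).choose p : ℂ) * (-1)^(m+1-p) * P.eval (x + p*y) = 0 := by
  induction m generalizing P x with
  | zero =>
    rw [Polynomial.eq_C_of_natDegree_le_zero hP]
    simp [Finset.sum_range_succ]
  | succ n ih =>
    have h1 : (Polynomial.taylor y P - P).natDegree ≤ n := frechet_deg_drop P y n hP
    have h2 := ih (Polynomial.taylor y P - P) h1 x
    have h3 : ∀ p : ℕ, (Polynomial.taylor y P - P).eval (x + p*y)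
        = P.eval (x + ((p+1 : ℕ) : ℂ)*y) - P.eval (x + p*y) := by
      intro p
      rw [Polynomial.eval_sub, Polynomial.taylor_eval]
      have : x + (p:ℂ)*y + y = x + ((p+1 : ℕ) : ℂ)*y := by push_cast; ring
      rw [this]
    have hps := frechet_pascal (n+1) (fun p => P.eval (x + p*y))
    rw [show n+1+2 = n+1+1+1 from rfl]
    rw [← hps]
    rw [← h2]
    apply Finset.sum_congr rfl
    intro p _
    rw [h3 p]

lemma frechet_fwd (m : ℕ) (g : ℝ → ℂ) (y x0 : ℝ)
    (hg : ∀ x : ℝ, ∑ p ∈ range (m+2),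
        ((m+1).choose p : ℂ) * (-1)^(m+1-p) * g (x + p*y) = 0)
    (h0 : ∀ k : ℕ, k ≤ m → g (x0 + k*y) = 0) :
    ∀ n : ℕ, g (x0 + n*y) = 0 := by
  intro n
  induction n using Nat.strong_induction_on with
  | _ n ih =>
    by_cases hn : n ≤ m
    · exact h0 n hn
    · push_neg at hn
      obtain ⟨j, rfl⟩ : ∃ j, n = j + (m+1) := ⟨n - (m+1), by omega⟩
      have hsum := hg (x0 + j*y)
      rw [Finset.sum_range_succ] at hsum
      have hz : ∑ p ∈ range (m+1),
          ((m+1).choose p : ℂ) * (-1)^(m+1-p) * g (x0 + j*y + p*y) = 0 := by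
        apply Finset.sum_eq_zero
        intro p hp
        rw [Finset.mem_range] at hp
        have harg : x0 + (j:ℝ)*y + (p:ℝ)*y = x0 + ((j+p : ℕ):ℝ)*y := by push_cast; ring
        rw [harg, ih (j+p) (by omega)]
        ring
      rw [hz, zero_add, Nat.choose_self, Nat.sub_self] at hsum
      have harg : x0 + (j:ℝ)*y + ((m+1 : ℕ):ℝ)*y = x0 + ((j+(m+1) : ℕ):ℝ)*y := by
        push_cast; ring
      rw [harg] at hsum
      simpa using hsum

lemma frechet_bwd (m : ℕ) (g : ℝ → ℂ) (y x0 : ℝ) (N : ℕ)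
    (hg : ∀ x : ℝ, ∑ p ∈ range (m+2),
        ((m+1).choose p : ℂ) * (-1)^(m+1-p) * g (x + p*y) = 0)
    (hN : ∀ n : ℕ, N ≤ n → g (x0 + n*y) = 0) :
    ∀ n : ℕ, g (x0 + n*y) = 0 := by
  suffices H : ∀ k n : ℕ, N - k ≤ n → g (x0 + n*y) = 0 by
    intro n; exact H N n (by omega)
  intro k
  induction k with
  | zero => intro n hn; exact hN n (by omega)
  | succ k ih =>
    intro n hn
    by_cases h1 : N - k ≤ n
    · exact ih n h1
    · have hsum := hg (x0 + n*y)
      rw [Finset.sum_range_succ'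
        (fun p => ((m+1).choose p : ℂ) * (-1)^(m+1-p) * g (x0 + n*y + p*y)) (m+1)] at hsum
      have hz : ∑ p ∈ range (m+1),
          ((m+1).choose (p+1) : ℂ) * (-1)^(m+1-(p+1)) * g (x0 + n*y + ((p+1:ℕ):ℝ)*y) = 0 := by
        apply Finset.sum_eq_zero
        intro p hp
        have harg : x0 + (n:ℝ)*y + ((p+1 : ℕ):ℝ)*y = x0 + ((n+(p+1) : ℕ):ℝ)*y := by
          push_cast; ring
        rw [harg, ih (n+(p+1)) (by omega)]
        ring
      rw [hz, zero_add] at hsum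
      simp only [Nat.choose_zero_right, Nat.cast_one, one_mul, Nat.sub_zero, Nat.cast_zero,
        zero_mul, add_zero] at hsum
      have hne : ((-1 : ℂ))^(m+1) ≠ 0 := by
        apply pow_ne_zero; norm_num
      field_simp at hsum
      simpa using hsum

lemma frechet_geq (f : ℝ → ℂ) (m : ℕ)
    (heq : ∀ x y : ℝ, ∑ p ∈ Finset.range (m + 2),
        ((m + 1).choose p : ℂ) * (-1) ^ (m + 1 - p) * f (x + p * y) = 0)
    (P : Polynomial ℂ) (hP : P.natDegree ≤ m) :
    ∀ x y : ℝ, ∑ p ∈ range (m+2),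
        ((m+1).choose p : ℂ) * (-1)^(m+1-p)
          * (f (x + p*y) - P.eval ((x + p*y : ℝ) : ℂ)) = 0 := by
  intro x y
  have h1 := heq x y
  have h2 := frechet_polyD m P hP (x:ℂ) (y:ℂ)
  have h3 : ∀ p : ℕ, ((x + p*y : ℝ) : ℂ) = (x:ℂ) + p*(y:ℂ) := by
    intro p; push_cast; ring
  simp only [h3, mul_sub]
  rw [Finset.sum_sub_distrib, h1, h2, sub_zero]

theorem stmt3 (f : ℝ → ℂ) (m : ℕ) (hf : Continuous f)
    (heq : ∀ x y : ℝ, ∑ p ∈ Finset.range (m + 2),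
        ((m + 1).choose p : ℂ) * (-1) ^ (m + 1 - p) * f (x + p * y) = 0) :
    ∃ P : Polynomial ℂ, P.natDegree ≤ m ∧ ∀ x : ℝ, f x = P.eval (x : ℂ) := by
  classical
  set s : Finset ℕ := Finset.range (m+1) with hs
  have hcard : #s = m+1 := Finset.card_range _
  have hinj : ∀ d : ℕ, 0 < d →
      Set.InjOn (fun i : ℕ => (((i:ℝ)/(d:ℝ) : ℝ) : ℂ)) s := by
    intro d hd i _ j _ hij
    simp only [Complex.ofReal_inj] at hij
    have hd' : (d:ℝ) ≠ 0 := by positivity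
    field_simp at hij
    exact_mod_cast hij
  set Q : ℕ → Polynomial ℂ := fun d =>
    Lagrange.interpolate s (fun i : ℕ => (((i:ℝ)/(d:ℝ) : ℝ) : ℂ))
      (fun i => f ((i:ℝ)/(d:ℝ))) with hQ
  have hQdeglt : ∀ d : ℕ, 0 < d → (Q d).degree < ((m+1 : ℕ) : WithBot ℕ) := by
    intro d hd
    have := Lagrange.degree_interpolate_lt (s := s)
      (fun i => f ((i:ℝ)/(d:ℝ))) (hinj d hd)
    rwa [hcard] at this
  have hQdeg : ∀ d : ℕ, 0 < d → (Q d).natDegree ≤ m := by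
    intro d hd
    by_cases h0 : Q d = 0
    · simp [h0]
    · have := (Polynomial.natDegree_lt_iff_degree_lt h0).mpr (hQdeglt d hd)
      omega
  have hQnode : ∀ d : ℕ, 0 < d → ∀ i ∈ s,
      (Q d).eval (((i:ℝ)/(d:ℝ) : ℝ) : ℂ) = f ((i:ℝ)/(d:ℝ)) := by
    intro d hd i hi
    exact Lagrange.eval_interpolate_at_node _ (hinj d hd) hi
  -- forward step : f (n/d) = (Q d) (n/d) for all naturals n
  have hA : ∀ d : ℕ, 0 < d → ∀ n : ℕ,
      f ((n:ℝ)/d) = (Q d).eval (((n:ℝ)/d : ℝ) : ℂ) := by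
    intro d hd n
    have hg := frechet_geq f m heq (Q d) (hQdeg d hd)
    have key := frechet_fwd m (fun x => f x - (Q d).eval ((x : ℝ) : ℂ)) (1/d) 0
      (fun x => hg x (1/d)) ?_ n
    · have harg : (0:ℝ) + (n:ℝ)*(1/d) = (n:ℝ)/d := by ring
      rw [harg] at key
      exact sub_eq_zero.mp key
    · intro k hk
      have harg : (0:ℝ) + (k:ℝ)*(1/d) = (k:ℝ)/d := by ring
      simp only [harg]
      rw [hQnode d hd k (by rw [hs, Finset.mem_range]; omega)]
      ring
  -- all the interpolation polynomials agree
  have hQeq : ∀ d : ℕ, 0 < d → Q d = Q 1 := by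
    intro d hd
    apply Polynomial.eq_of_degrees_lt_of_eval_index_eq
      (v := fun i : ℕ => ((i:ℝ) : ℂ)) s
    · intro i _ j _ hij
      simp only at hij
      exact_mod_cast hij
    · rw [hcard]; exact_mod_cast hQdeglt d hd
    · rw [hcard]; exact_mod_cast hQdeglt 1 one_pos
    · intro i _
      have e1 : ((i*d : ℕ):ℝ)/(d:ℝ) = (i:ℝ) := by
        have hd' : (d:ℝ) ≠ 0 := by positivity
        push_cast
        field_simp
      have e2 : ((i : ℕ):ℝ)/((1:ℕ):ℝ) = (i:ℝ) := by norm_num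
      have k1 := hA d hd (i*d)
      rw [e1] at k1
      have k2 := hA 1 one_pos i
      rw [e2] at k2
      rw [← k1, ← k2]
  set P : Polynomial ℂ := Q 1 with hPdef
  have hP : P.natDegree ≤ m := hQdeg 1 one_pos
  have hg := frechet_geq f m heq P hP
  have hApos : ∀ d : ℕ, 0 < d → ∀ n : ℕ,
      f ((n:ℝ)/d) = P.eval (((n:ℝ)/d : ℝ) : ℂ) := by
    intro d hd n
    rw [← hQeq d hd]
    exact hA d hd n
  have hint : ∀ d : ℕ, 0 < d → ∀ z : ℤ,
      f ((z:ℝ)/d) = P.eval (((z:ℝ)/d : ℝ) : ℂ) := by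
    intro d hd z
    rcases le_or_gt 0 z with hz | hz
    · lift z to ℕ using hz
      have := hApos d hd z
      simpa using this
    · set N := z.natAbs with hN
      have key := frechet_bwd m (fun x => f x - P.eval ((x : ℝ) : ℂ)) (1/d)
        ((z:ℝ)/d) N (fun x => hg x (1/d)) ?_ 0
      · simp only [Nat.cast_zero, zero_mul, add_zero] at key
        exact sub_eq_zero.mp key
      · intro n hn
        have hzn : 0 ≤ z + n := by omega
        have harg : (z:ℝ)/d + (n:ℝ)*(1/d) = (((z+n).toNat : ℕ):ℝ)/d := by
          have h' : (((z+n).toNat : ℕ):ℝ) = (z:ℝ) + (n:ℝ) := by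
            exact_mod_cast Int.toNat_of_nonneg hzn
          rw [h']
          ring
        simp only [harg]
        rw [hApos d hd ((z+n).toNat)]
        ring
  have hrat : ∀ q : ℚ, f (q:ℝ) = P.eval (((q:ℝ) : ℝ) : ℂ) := by
    intro q
    rw [Rat.cast_def]
    exact hint q.den q.pos q.num
  refine ⟨P, hP, ?_⟩
  have hfun : f = fun x : ℝ => P.eval ((x : ℝ) : ℂ) := by
    apply Continuous.ext_on (Rat.denseRange_cast (𝕜 := ℝ)) hf
    · exact (Polynomial.continuous P).comp Complex.continuous_ofReal
    · rintro x ⟨q, rfl⟩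
      exact hrat q
  intro x
  rw [hfun]
end

section
/- Let f : ℝ → ℂ be continuous and suppose that the linear span of all translates τ_y f, y ∈ ℝ (where τ_y f(x) = f(x+y)), is finite-dimensional. Then f is an exponential polynomial, i.e., f(x) = Σ_{j=1}^N P_j(x) exp(λ_j x) for some polynomials P_j ∈ ℂ[x] and scalars λ_j ∈ ℂ. -/
/-!
The span `V` of the translates of `f` is a finite-dimensional, translation-invariant space of
continuous functions. The functionals `g ↦ ∫₀ˢ g` separate the points of `V`, so evaluation at `0`
is a finite combination `∑ cₛ ∫₀ˢ` on `V`. Applied to the translates of `g ∈ V` this gives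
`g x = ∑ cₛ ∫ₓˣ⁺ˢ g`, so `g` is differentiable with `g' = ∑ cₛ (g(· + s) - g) ∈ V`: differentiation
is an endomorphism `D` of `V`. Over `ℂ`, `V` is the sum of the generalized eigenspaces of `D`, and
a function with `(D - μ)ᵏ g = 0` is `p(x) e^{μx}` by induction on `k`.
-/

open Polynomial intervalIntegral

def expPolynomials : Submodule ℂ (ℝ → ℂ) where
  carrier := {g | ∃ (N : ℕ) (P : Fin N → ℂ[X]) (lam : Fin N → ℂ),
    ∀ x : ℝ, g x = ∑ j, (P j).eval (x : ℂ) * Complex.exp (lam j * x)}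
  zero_mem' := ⟨0, Fin.elim0, Fin.elim0, fun x => by simp⟩
  add_mem' := by
    rintro g h ⟨N, P, lam, hg⟩ ⟨M, Q, mu, hh⟩
    exact ⟨N + M, Fin.append P Q, Fin.append lam mu, fun x => by simp [Fin.sum_univ_add, hg, hh]⟩
  smul_mem' := by
    rintro c g ⟨N, P, lam, hg⟩
    exact ⟨N, fun j => C c * P j, lam, fun x => by simp [hg, Finset.mul_sum, mul_assoc]⟩

lemma polynomial_mul_exp_mem_expPolynomials (p : ℂ[X]) (μ : ℂ) :
    (fun x : ℝ => p.eval (x : ℂ) * Complex.exp (μ * x)) ∈ expPolynomials :=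
  ⟨1, fun _ => p, fun _ => μ, fun x => by simp⟩

lemma Polynomial.exists_derivative_eq {K : Type*} [Field K] [CharZero K] (p : K[X]) :
    ∃ q : K[X], derivative q = p := by
  induction p using Polynomial.induction_on with
  | C a => exact ⟨C a * X, by simp⟩
  | add p q hp hq =>
    obtain ⟨P, rfl⟩ := hp
    obtain ⟨Q, rfl⟩ := hq
    exact ⟨P + Q, derivative_add⟩
  | monomial n a _ =>
    refine ⟨C (a / (n + 2)) * X ^ (n + 2), ?_⟩
    have hn : (n + 2 : K) ≠ 0 := by norm_cast
    rw [derivative_C_mul_X_pow]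
    push_cast
    rw [div_mul_cancel₀ a hn]

lemma hasDerivAt_cexp_const_mul (μ : ℂ) (x : ℝ) :
    HasDerivAt (fun t : ℝ => Complex.exp (μ * t)) (μ * Complex.exp (μ * x)) x := by
  simpa [mul_comm] using ((hasDerivAt_id (x : ℂ)).const_mul μ).comp_ofReal.cexp

lemma eq_mul_cexp_of_hasDerivAt {r : ℝ → ℂ} {μ : ℂ} (hr : ∀ x, HasDerivAt r (μ * r x) x)
    (x : ℝ) : r x = r 0 * Complex.exp (μ * x) := by
  have hw : ∀ t : ℝ, HasDerivAt (fun t : ℝ => Complex.exp (-μ * t) * r t) 0 t := fun t =>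
    ((hasDerivAt_cexp_const_mul (-μ) t).mul (hr t)).congr_deriv (by ring)
  have hconst := is_const_of_deriv_eq_zero (fun t => (hw t).differentiableAt)
    (fun t => (hw t).deriv) x 0
  simp only [Complex.ofReal_zero, mul_zero, Complex.exp_zero, one_mul] at hconst
  rw [← hconst, mul_right_comm, ← Complex.exp_add]
  simp

lemma exists_polynomial_of_hasDerivAt {g : ℝ → ℂ} {μ : ℂ} {p : ℂ[X]}
    (hg : ∀ x, HasDerivAt g (μ * g x + p.eval (x : ℂ) * Complex.exp (μ * x)) x) :
    ∃ q : ℂ[X], ∀ x : ℝ, g x = q.eval (x : ℂ) * Complex.exp (μ * x) := by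
  obtain ⟨Q, hQ⟩ := p.exists_derivative_eq
  set r : ℝ → ℂ := fun x => g x - Q.eval (x : ℂ) * Complex.exp (μ * x)
  have hr : ∀ x, HasDerivAt r (μ * r x) x := fun x => by
    have hQx := ((Q.hasDerivAt (x : ℂ)).comp_ofReal).mul (hasDerivAt_cexp_const_mul μ x)
    exact ((hg x).sub hQx).congr_deriv (by rw [hQ]; ring)
  refine ⟨Q + C (r 0), fun x => ?_⟩
  have := eq_mul_cexp_of_hasDerivAt hr x
  simp only [r, eval_add, eval_C] at this ⊢
  linear_combination this

lemma hasDerivAt_integral_comp_add {E : Type*} [NormedAddCommGroup E] [NormedSpace ℝ E]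
    [CompleteSpace E] {g : ℝ → E} (hg : Continuous g) (s x : ℝ) :
    HasDerivAt (fun x => ∫ u in 0..s, g (u + x)) (g (s + x) - g x) x := by
  have hprim : ∀ t, HasDerivAt (fun t => ∫ u in 0..t, g u) (g t) t := fun t =>
    (hg.integral_hasStrictDerivAt 0 t).hasDerivAt
  simp_rw [integral_comp_add_right, zero_add]
  exact (((hprim (s + x)).comp_const_add s x).sub (hprim x)).congr_of_eventuallyEq
    (Filter.Eventually.of_forall fun t => (integral_interval_sub_left
      (hg.intervalIntegrable _ _) (hg.intervalIntegrable _ _)).symm)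

lemma continuous_of_mem_span {S : Set (ℝ → ℂ)} (hS : ∀ g ∈ S, Continuous g) {g : ℝ → ℂ}
    (hg : g ∈ Submodule.span ℂ S) : Continuous g := by
  induction hg using Submodule.span_induction with
  | mem g hg => exact hS g hg
  | zero => exact continuous_const
  | add g h _ _ hg hh => exact hg.add hh
  | smul c g _ hg => exact hg.const_smul c

lemma comp_add_const_mem_span {S : Set (ℝ → ℂ)} (hS : ∀ y : ℝ, ∀ g ∈ S, (fun x => g (x + y)) ∈ S)
    (y : ℝ) {g : ℝ → ℂ} (hg : g ∈ Submodule.span ℂ S) :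
    (fun x => g (x + y)) ∈ Submodule.span ℂ S := by
  have hle : Submodule.span ℂ S ≤ (Submodule.span ℂ S).comap (LinearMap.funLeft ℂ ℂ (· + y)) :=
    Submodule.span_le.2 fun g hg => Submodule.subset_span (hS y g hg)
  exact hle hg

section TranslationInvariant

variable {W : Submodule ℂ (ℝ → ℂ)}

def translateEnd (htrans : ∀ y : ℝ, ∀ g ∈ W, (fun x => g (x + y)) ∈ W) (y : ℝ) :
    Module.End ℂ W :=
  (LinearMap.funLeft ℂ ℂ (· + y)).restrict (htrans y)

@[simp]
lemma translateEnd_apply (htrans : ∀ y : ℝ, ∀ g ∈ W, (fun x => g (x + y)) ∈ W) (y : ℝ) (g : W)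
    (x : ℝ) : (translateEnd htrans y g : ℝ → ℂ) x = (g : ℝ → ℂ) (x + y) :=
  rfl

noncomputable def integralDual (hcont : ∀ g ∈ W, Continuous g) (s : ℝ) : Module.Dual ℂ W where
  toFun g := ∫ t in 0..s, (g : ℝ → ℂ) t
  map_add' g h := integral_add ((hcont g g.2).intervalIntegrable _ _)
    ((hcont h h.2).intervalIntegrable _ _)
  map_smul' c _ := integral_smul c _

lemma eval_zero_mem_span_integralDual [FiniteDimensional ℂ W] (hcont : ∀ g ∈ W, Continuous g) :
    LinearMap.proj 0 ∘ₗ W.subtype ∈ Submodule.span ℂ (Set.range (integralDual hcont)) := by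
  refine FiniteDimensional.mem_span_of_iInf_ker_le_ker fun g hg => ?_
  have hprim : (fun s => ∫ t in 0..s, (g : ℝ → ℂ) t) = 0 :=
    funext fun s => (Submodule.mem_iInf _).1 hg s
  have hg0 : (g : ℝ → ℂ) = 0 := funext fun t => by
    rw [← Continuous.deriv_integral _ (hcont g g.2) 0 t, hprim]
    simp
  simp [hg0]

lemma exists_end_hasDerivAt [FiniteDimensional ℂ W] (hcont : ∀ g ∈ W, Continuous g)
    (htrans : ∀ y : ℝ, ∀ g ∈ W, (fun x => g (x + y)) ∈ W) :
    ∃ D : Module.End ℂ W, ∀ (g : W) (x : ℝ), HasDerivAt g ((D g : ℝ → ℂ) x) x := by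
  obtain ⟨c, hc⟩ :=
    Finsupp.mem_span_range_iff_exists_finsupp.1 (eval_zero_mem_span_integralDual hcont)
  refine ⟨c.sum fun s a => a • (translateEnd htrans s - 1), fun g x => ?_⟩
  have hg : ∀ t, (g : ℝ → ℂ) t = ∑ s ∈ c.support, c s * ∫ u in 0..s, (g : ℝ → ℂ) (u + t) :=
    fun t => by simpa [Finsupp.sum, integralDual] using
      (LinearMap.congr_fun hc (translateEnd htrans t g)).symm
  have hsum := HasDerivAt.fun_sum (u := c.support) fun s _ =>
    (hasDerivAt_integral_comp_add (hcont g g.2) s x).const_mul (c s)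
  refine (hsum.congr_deriv ?_).congr_of_eventuallyEq (Filter.Eventually.of_forall hg)
  simp [Finsupp.sum, add_comm]

lemma exists_polynomial_of_mem_maxGenEigenspace {D : Module.End ℂ W}
    (hD : ∀ (g : W) (x : ℝ), HasDerivAt g ((D g : ℝ → ℂ) x) x) {μ : ℂ} {g : W}
    (hg : g ∈ D.maxGenEigenspace μ) :
    ∃ p : ℂ[X], ∀ x : ℝ, (g : ℝ → ℂ) x = p.eval (x : ℂ) * Complex.exp (μ * x) := by
  obtain ⟨k, hk⟩ := (Module.End.mem_maxGenEigenspace D μ g).1 hg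
  clear hg
  induction k generalizing g with
  | zero => exact ⟨0, by simp [show g = 0 by simpa using hk]⟩
  | succ k ih =>
    obtain ⟨p, hp⟩ := ih (g := (D - μ • 1) g) (by rwa [← Module.End.mul_apply, ← pow_succ])
    refine exists_polynomial_of_hasDerivAt (p := p) fun x => (hD g x).congr_deriv ?_
    simp [← hp]

lemma le_expPolynomials [FiniteDimensional ℂ W] {D : Module.End ℂ W}
    (hD : ∀ (g : W) (x : ℝ), HasDerivAt g ((D g : ℝ → ℂ) x) x) : W ≤ expPolynomials := by
  rw [← W.map_subtype_top, ← D.iSup_maxGenEigenspace_eq_top, Submodule.map_iSup, iSup_le_iff]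
  intro μ
  rw [Submodule.map_le_iff_le_comap]
  intro g hg
  obtain ⟨p, hp⟩ := exists_polynomial_of_mem_maxGenEigenspace hD hg
  simpa [← funext hp] using polynomial_mul_exp_mem_expPolynomials p μ

end TranslationInvariant

theorem stmt6 (f : ℝ → ℂ) (hf : Continuous f)
    (hfd : FiniteDimensional ℂ
      (Submodule.span ℂ {g : ℝ → ℂ | ∃ y : ℝ, g = fun x => f (x + y)})) :
    ∃ (N : ℕ) (P : Fin N → Polynomial ℂ) (lam : Fin N → ℂ),
      ∀ x : ℝ, f x = ∑ j, (P j).eval (x : ℂ) * Complex.exp (lam j * x) := by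
  set S : Set (ℝ → ℂ) := {g | ∃ y : ℝ, g = fun x => f (x + y)}
  have hcont : ∀ g ∈ S, Continuous g := by
    rintro _ ⟨y, rfl⟩
    fun_prop
  have htrans : ∀ z : ℝ, ∀ g ∈ S, (fun x => g (x + z)) ∈ S := by
    rintro z _ ⟨y, rfl⟩
    exact ⟨z + y, funext fun x => by simp [add_assoc]⟩
  obtain ⟨D, hD⟩ := exists_end_hasDerivAt (fun g => continuous_of_mem_span hcont)
    (fun y g => comp_add_const_mem_span htrans y)
  exact le_expPolynomials hD (Submodule.subset_span ⟨0, by simp⟩)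
end

section
/- Let f₁, f₂ : ℝ → ℂ be continuous and b₁, b₂, c₁, c₂ ∈ ℝ nonzero reals with c₁/b₁ ≠ c₂/b₂, and suppose f₁(b₁x + c₁y) + f₂(b₂x + c₂y) = g(x) + h(y) for all x, y ∈ ℝ, where g, h : ℝ → ℂ. Then f₁ and f₂ are polynomials of degree at most 2. -/
/-!
Shifting `(x, y)` along the kernel direction of `(b₂, c₂)` leaves the argument of `f₂` fixed and
moves that of `f₁` by an arbitrary `s`, so every difference `f₁(· + s) - f₁` has the separated form
`G(x) + H(y)` in the coordinates `b₁ x + c₁ y`; mixed second differences kill such a function. Hence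
all third differences of `f₁` vanish: its polar form `f₁(a + b) - f₁ a - f₁ b + f₁ 0` is
biadditive, and continuity makes it `a b • d`. Then `f₁ x - f₁ 0 - (x² / 2) • d` is additive and
continuous, hence linear. The same holds for `f₂` by symmetry.
-/

section Additive

variable {E : Type*} [AddCommGroup E]

def polar (f : ℝ → E) (a b : ℝ) : E :=
  f (a + b) - f a - f b + f 0

lemma polar_comm (f : ℝ → E) (a b : ℝ) : polar f a b = polar f b a := by
  simp only [polar, add_comm a b]
  abel

lemma polar_add_left_of_functional_equation {f₁ f₂ g h : ℝ → E} {b₁ b₂ c₁ c₂ : ℝ}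
    (hb₁ : b₁ ≠ 0) (hc₁ : c₁ ≠ 0) (hdet : b₁ * c₂ ≠ c₁ * b₂)
    (heq : ∀ x y, f₁ (b₁ * x + c₁ * y) + f₂ (b₂ * x + c₂ * y) = g x + h y) (a a' b : ℝ) :
    polar f₁ (a + a') b = polar f₁ a b + polar f₁ a' b := by
  have hk : b₁ * c₂ - c₁ * b₂ ≠ 0 := sub_ne_zero.mpr hdet
  set k := b₁ * c₂ - c₁ * b₂
  have shift : ∀ s x y, f₁ (b₁ * x + c₁ * y + s) - f₁ (b₁ * x + c₁ * y)
      = (g (x + s * c₂ / k) - g x) + (h (y - s * b₂ / k) - h y) := by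
    intro s x y
    have hshift := heq (x + s * c₂ / k) (y - s * b₂ / k)
    have e₁ : b₁ * (x + s * c₂ / k) + c₁ * (y - s * b₂ / k) = b₁ * x + c₁ * y + s := by
      field_simp
      ring
    have e₂ : b₂ * (x + s * c₂ / k) + c₂ * (y - s * b₂ / k) = b₂ * x + c₂ * y := by
      field_simp
      ring
    rw [e₁, e₂] at hshift
    linear_combination (norm := abel) hshift - heq x y
  have hab := shift a' (a / b₁) (b / c₁)
  have ha := shift a' (a / b₁) 0
  have hb := shift a' 0 (b / c₁)
  have h0 := shift a' 0 0
  simp only [mul_div_cancel₀ _ hb₁, mul_div_cancel₀ _ hc₁, mul_zero, add_zero, zero_add]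
    at hab ha hb h0
  simp only [polar]
  rw [← sub_eq_zero]
  calc _ = (f₁ (a + b + a') - f₁ (a + b)) - (f₁ (a + a') - f₁ a)
        - (f₁ (b + a') - f₁ b) + (f₁ a' - f₁ 0) := by
          simp only [add_comm b a', add_right_comm a b a']
          abel
    _ = 0 := by
          rw [hab, ha, hb, h0]
          abel

end Additive

section Continuous

variable {E : Type*} [AddCommGroup E] [Module ℝ E] [TopologicalSpace E] [ContinuousSMul ℝ E]
  [T2Space E]

lemma eq_smul_of_continuous_of_map_add {φ : ℝ → E} (hφ : Continuous φ)
    (hadd : ∀ a b, φ (a + b) = φ a + φ b) (x : ℝ) : φ x = x • φ 1 := by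
  simpa using map_real_smul (AddMonoidHom.mk' φ hadd) hφ x 1

variable [IsTopologicalAddGroup E]

lemma polar_eq_mul_smul {f : ℝ → E} (hf : Continuous f)
    (hadd : ∀ a a' b, polar f (a + a') b = polar f a b + polar f a' b) (a b : ℝ) :
    polar f a b = (a * b) • polar f 1 1 := by
  have hcont : ∀ b, Continuous fun a => polar f a b := fun b => by
    unfold polar
    fun_prop
  have hleft : ∀ a b, polar f a b = a • polar f 1 b := fun a b =>
    eq_smul_of_continuous_of_map_add (hcont b) (fun a a' => hadd a a' b) a
  have hright : polar f 1 b = b • polar f 1 1 := by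
    rw [polar_comm, hleft, polar_comm]
  rw [hleft, hright, mul_smul]

lemma exists_quadratic_of_polar_add_left {f : ℝ → E} (hf : Continuous f)
    (hadd : ∀ a a' b, polar f (a + a') b = polar f a b + polar f a' b) :
    ∃ p q r : E, ∀ x : ℝ, f x = x ^ 2 • p + x • q + r := by
  set d := polar f 1 1
  set ψ : ℝ → E := fun x => f x - f 0 - (x ^ 2 / 2) • d
  have hψ : Continuous ψ := by fun_prop
  have hψadd : ∀ a b, ψ (a + b) = ψ a + ψ b := by
    intro a b
    have hpolar : f (a + b) - f a - f b + f 0 = (a * b) • d := polar_eq_mul_smul hf hadd a b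
    simp only [ψ]
    rw [← sub_eq_zero]
    calc _ = (f (a + b) - f a - f b + f 0) - (a * b) • d := by module
      _ = 0 := by rw [hpolar, sub_self]
  refine ⟨(1 / 2 : ℝ) • d, ψ 1, f 0, fun x => ?_⟩
  have hlin := eq_smul_of_continuous_of_map_add hψ hψadd x
  simp only [ψ] at hlin ⊢
  rw [← hlin]
  module

end Continuous

lemma exists_polynomial_natDegree_le_two {f : ℝ → ℂ} {p q r : ℂ}
    (hf : ∀ x : ℝ, f x = x ^ 2 • p + x • q + r) :
    ∃ P : Polynomial ℂ, P.natDegree ≤ 2 ∧ ∀ x : ℝ, f x = P.eval (x : ℂ) := by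
  open Polynomial in
  refine ⟨C p * X ^ 2 + C q * X + C r, by compute_degree, fun x => ?_⟩
  simp only [hf x, Complex.real_smul, eval_add, eval_mul, eval_C, eval_pow, eval_X]
  push_cast
  ring

theorem stmt12 (f₁ f₂ g h : ℝ → ℂ) (hf₁ : Continuous f₁) (hf₂ : Continuous f₂)
    (b₁ b₂ c₁ c₂ : ℝ) (hb₁ : b₁ ≠ 0) (hb₂ : b₂ ≠ 0) (hc₁ : c₁ ≠ 0) (hc₂ : c₂ ≠ 0)
    (hratio : c₁ / b₁ ≠ c₂ / b₂)
    (heq : ∀ x y : ℝ, f₁ (b₁ * x + c₁ * y) + f₂ (b₂ * x + c₂ * y) = g x + h y) :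
    ∃ P₁ P₂ : Polynomial ℂ, P₁.natDegree ≤ 2 ∧ P₂.natDegree ≤ 2 ∧
      (∀ x : ℝ, f₁ x = P₁.eval (x : ℂ)) ∧ (∀ x : ℝ, f₂ x = P₂.eval (x : ℂ)) := by
  have hdet : b₁ * c₂ ≠ c₁ * b₂ := fun hcon => hratio (by field_simp; linarith)
  have hdet' : b₂ * c₁ ≠ c₂ * b₁ := by rw [mul_comm b₂, mul_comm c₂]; exact hdet.symm
  have heq' : ∀ x y, f₂ (b₂ * x + c₂ * y) + f₁ (b₁ * x + c₁ * y) = g x + h y :=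
    fun x y => (add_comm _ _).trans (heq x y)
  obtain ⟨p₁, q₁, r₁, hquad₁⟩ := exists_quadratic_of_polar_add_left hf₁
    (polar_add_left_of_functional_equation hb₁ hc₁ hdet heq)
  obtain ⟨p₂, q₂, r₂, hquad₂⟩ := exists_quadratic_of_polar_add_left hf₂
    (polar_add_left_of_functional_equation hb₂ hc₂ hdet' heq')
  obtain ⟨P₁, hdeg₁, hP₁⟩ := exists_polynomial_natDegree_le_two hquad₁
  obtain ⟨P₂, hdeg₂, hP₂⟩ := exists_polynomial_natDegree_le_two hquad₂
  exact ⟨P₁, P₂, hdeg₁, hdeg₂, hP₁, hP₂⟩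
end

section
/- Let f : ℝ → ℂ be continuous and suppose there exist g, h : ℝ → ℂ with f(x + y) + f(x − y) = g(x) + h(y) for all x, y ∈ ℝ. Then f is a polynomial of degree at most 2, i.e., there are a, b, c ∈ ℂ with f(x) = a x² + b x + c. -/
theorem stmt13 (f : ℝ → ℂ) (hf : Continuous f)
    (hexists : ∃ g h : ℝ → ℂ, ∀ x y : ℝ, f (x + y) + f (x - y) = g x + h y) :
    ∃ a b c : ℂ, ∀ x : ℝ, f x = a * x ^ 2 + b * x + c := by
  obtain ⟨g, h, hgh⟩ := hexists
  set E : ℝ → ℂ := fun y => f y + f (-y) - 2 * f 0 with hEdef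
  set O : ℝ → ℂ := fun y => f y - f (-y) with hOdef
  have key : ∀ x y : ℝ, f (x + y) + f (x - y) = 2 * f x + E y := by
    intro x y
    have h1 := hgh x 0
    have h2 := hgh 0 y
    have h3 := hgh 0 0
    have h4 := hgh x y
    simp only [add_zero, sub_zero, zero_add, zero_sub] at h1 h2 h3
    simp only [hEdef]
    linear_combination h4 - h1 - h2 + h3
  have hE0 : E 0 = 0 := by simp only [hEdef, neg_zero]; ring
  have hEeven : ∀ y : ℝ, E (-y) = E y := by
    intro y; simp only [hEdef, neg_neg]; ring
  -- O is additive
  have hOsub : ∀ x y : ℝ, O (x - y) = O x - O y := by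
    intro x y
    have h1 := key x y
    have h2 := key y x
    rw [add_comm y x] at h2
    have hyx : y - x = -(x - y) := by ring
    rw [hyx] at h2
    simp only [hOdef, hEdef]
    simp only [hOdef, hEdef] at h1 h2
    linear_combination h1 - h2
  have hOadd : ∀ x y : ℝ, O (x + y) = O x + O y := by
    intro x y
    have hO0 : O 0 = 0 := by simpa using hOsub 0 0
    have hOneg : O (-y) = - O y := by
      have := hOsub 0 y; rw [zero_sub, hO0] at this; linear_combination this
    have := hOsub x (-y)
    rw [sub_neg_eq_add, hOneg] at this
    linear_combination this
  -- E satisfies the quadratic functional equation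
  have hquad : ∀ x y : ℝ, E (x + y) + E (x - y) = 2 * E x + 2 * E y := by
    intro x y
    have h1 := key x y
    have h2 := key (-x) (-y)
    have e1 : -x + -y = -(x + y) := by ring
    have e2 : -x - -y = -(x - y) := by ring
    rw [e1, e2, hEeven] at h2
    simp only [hEdef]
    simp only [hEdef] at h1 h2
    linear_combination h1 + h2
  -- O is continuous, hence linear
  have hOcont : Continuous O := by
    rw [hOdef]; exact hf.sub (hf.comp continuous_neg)
  have hOlin : ∀ x : ℝ, O x = (x : ℂ) * O 1 := by
    intro x
    have h := ((AddMonoidHom.mk' O hOadd).toRealLinearMap hOcont).map_smul x 1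
    rw [smul_eq_mul, mul_one] at h
    have h2 : O x = x • O 1 := h
    rw [h2, Complex.real_smul]
  -- E(n x) = n^2 E x for naturals
  have hEnat : ∀ (n : ℕ) (x : ℝ), E (n * x) = (n : ℂ) ^ 2 * E x := by
    have main : ∀ (n : ℕ) (x : ℝ),
        E (n * x) = (n : ℂ) ^ 2 * E x ∧ E ((n + 1) * x) = ((n : ℂ) + 1) ^ 2 * E x := by
      intro n
      induction n with
      | zero => intro x; constructor <;> simp [hE0]
      | succ n ih =>
        intro x
        obtain ⟨ih1, ih2⟩ := ih x
        refine ⟨by push_cast; linear_combination ih2, ?_⟩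
        have hq := hquad ((n + 1 : ℕ) * x) x
        have e1 : ((n + 1 : ℕ) : ℝ) * x + x = ((n + 1 + 1 : ℕ) : ℝ) * x := by push_cast; ring
        have e2 : ((n + 1 : ℕ) : ℝ) * x - x = ((n : ℕ) : ℝ) * x := by push_cast; ring
        rw [e1, e2] at hq
        push_cast at hq ih1 ih2 ⊢
        linear_combination hq - ih1 + 2 * ih2
    intro n x; exact (main n x).1
  have hEint : ∀ (n : ℤ) (x : ℝ), E (n * x) = (n : ℂ) ^ 2 * E x := by
    intro n x
    obtain ⟨m, rfl | rfl⟩ := n.eq_nat_or_neg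
    · push_cast; exact hEnat m x
    · have : ((-(m : ℤ) : ℤ) : ℝ) * x = -((m : ℝ) * x) := by push_cast; ring
      rw [this, hEeven]
      push_cast
      rw [hEnat m x]; ring
  have hErat : ∀ q : ℚ, E (q : ℝ) = ((q : ℝ) : ℂ) ^ 2 * E 1 := by
    intro q
    have hden : ((q.den : ℤ) : ℝ) * (q : ℝ) = ((q.num : ℤ) : ℝ) := by
      push_cast
      rw [mul_comm]
      exact_mod_cast Rat.mul_den_eq_num q
    have hdenC : ((q.den : ℤ) : ℂ) * ((q : ℝ) : ℂ) = ((q.num : ℤ) : ℂ) := by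
      exact_mod_cast congrArg Complex.ofReal hden
    have h1 := hEint q.den (q : ℝ)
    rw [hden] at h1
    have h2 := hEint q.num 1
    rw [mul_one] at h2
    rw [h2] at h1
    have hdne : ((q.den : ℤ) : ℂ) ≠ 0 := by exact_mod_cast q.den_nz
    refine mul_left_cancel₀ (pow_ne_zero 2 hdne) ?_
    rw [← h1]
    push_cast at hdenC ⊢
    linear_combination (-(((q.den : ℂ)) * ((q : ℂ)) + ((q.num : ℂ))) * E 1) * hdenC
  have hEcont : Continuous E := by
    rw [hEdef]; exact (hf.add (hf.comp continuous_neg)).sub continuous_const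
  have hEall : ∀ x : ℝ, E x = (x : ℂ) ^ 2 * E 1 := by
    have hcont2 : Continuous fun x : ℝ => ((x : ℂ)) ^ 2 * E 1 := by
      exact ((Complex.continuous_ofReal.pow 2).mul continuous_const)
    have := Continuous.ext_on Rat.denseRange_cast hEcont hcont2 ?_
    · exact fun x => congrFun this x
    · rintro x ⟨q, rfl⟩
      exact hErat q
  refine ⟨E 1 / 2, O 1 / 2, f 0, fun x => ?_⟩
  have h1 := hEall x
  have h2 := hOlin x
  have hsum : E x + O x = 2 * f x - 2 * f 0 := by
    simp only [hEdef, hOdef]; ring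
  linear_combination (h1 + h2 - hsum) / 2
end

section
/- Suppose f₁, …, f_m : ℝ^d → ℂ and c₁, …, c_m ∈ GL(d,ℝ) satisfy: there is a finite-dimensional subspace W ⊆ C(ℝ^d, ℂ) with Σ_{i=1}^m τ_{c_i y}(f_i) ∈ W for all y ∈ ℝ^d. Then for any fixed h ∈ ℝ^d, the functions g_i(x) := f_i(x + (I − c_i c₁⁻¹) h) − f_i(x), i = 2, …, m, satisfy Σ_{i=2}^m τ_{c_i y}(g_i) ∈ W + τ_h(W) for all y ∈ ℝ^d. -/
theorem stmt14 (d m : ℕ) (f : Fin (m + 1) → (Fin d → ℝ) → ℂ)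
    (c : Fin (m + 1) → Matrix (Fin d) (Fin d) ℝ)
    (hc : ∀ i, IsUnit (c i))
    (hfc : ∀ i, Continuous (f i))
    (W : Submodule ℂ ((Fin d → ℝ) → ℂ)) (hWfd : FiniteDimensional ℂ W)
    (hWcont : ∀ w ∈ W, Continuous w)
    (hmain : ∀ y : Fin d → ℝ, (fun x => ∑ i, f i (x + (c i).mulVec y)) ∈ W)
    (h : Fin d → ℝ) :
    ∀ y : Fin d → ℝ, ∃ w₁ ∈ W, ∃ w₂ ∈ W,
      ∀ x : Fin d → ℝ,
        (∑ i ∈ Finset.univ.erase 0,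
          (f i ((x + (c i).mulVec y) + (1 - c i * (c 0)⁻¹).mulVec h)
            - f i (x + (c i).mulVec y)))
        = w₁ x + w₂ (x + h) := by
  intro y
  set y' : Fin d → ℝ := y - ((c 0)⁻¹).mulVec h with hy'
  refine ⟨-(fun x => ∑ i, f i (x + (c i).mulVec y)), neg_mem (hmain y),
    (fun x => ∑ i, f i (x + (c i).mulVec y')), hmain y', fun x => ?_⟩
  have hdet : IsUnit (c 0).det := (Matrix.isUnit_iff_isUnit_det _).mp (hc 0)
  have key : (c 0) * (c 0)⁻¹ = 1 := Matrix.mul_nonsing_inv _ hdet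
  have hc0 : (c 0).mulVec y' = (c 0).mulVec y - h := by
    rw [hy', Matrix.mulVec_sub, Matrix.mulVec_mulVec, key, Matrix.one_mulVec]
  have hstep : ∀ i : Fin (m + 1),
      (x + h) + (c i).mulVec y'
        = (x + (c i).mulVec y) + (1 - c i * (c 0)⁻¹).mulVec h := by
    intro i
    rw [hy', Matrix.mulVec_sub, Matrix.sub_mulVec, Matrix.one_mulVec,
      ← Matrix.mulVec_mulVec]
    abel
  simp only [Pi.neg_apply]
  rw [← Finset.add_sum_erase _ (fun i => f i (x + (c i).mulVec y)) (Finset.mem_univ 0),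
    ← Finset.add_sum_erase _ (fun i => f i ((x + h) + (c i).mulVec y')) (Finset.mem_univ 0)]
  have h0 : f 0 ((x + h) + (c 0).mulVec y') = f 0 (x + (c 0).mulVec y) := by
    rw [hc0]; congr 1; abel
  rw [Finset.sum_sub_distrib]
  have : ∀ i ∈ Finset.univ.erase (0 : Fin (m+1)),
      f i ((x + (c i).mulVec y) + (1 - c i * (c 0)⁻¹).mulVec h)
        = f i ((x + h) + (c i).mulVec y') := fun i _ => by rw [hstep i]
  rw [Finset.sum_congr rfl this, h0]
  ring
end

section
/- Let G be a group acting linearly on a complex vector space X, generated by a finite set S. Suppose x ∈ X and a finite-dimensional subspace L ⊆ X are such that for every g ∈ S ∪ S⁻¹ there exists a finite-dimensional G-invariant subspace R(g) ⊆ X with g·x ∈ L + R(g). If moreover for every g ∈ G there is a finite-dimensional G-invariant R(g) with g·x ∈ L + R(g), then x belongs to a finite-dimensional G-invariant subspace of X. -/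
/-!
Let `I` be the sum of all finite-dimensional `G`-invariant subspaces. Modulo `I` every orbit
vector `g • x` lies in the image of `L`, so finitely many of them, `g • x` for `g ∈ F`, span the
orbit modulo `I`. For a generator `s` and `g ∈ F`, the vector `(s * g) • x` then lies in
`span (F • x)` plus a single finite-dimensional invariant subspace; adding these finitely many
subspaces to `span (F • x)` gives a finite-dimensional subspace stable under the generators.
It is stable under all of `G`, because a generator maps it injectively, hence onto itself.
-/

open Submodule Pointwise

section Invariant

variable {K G X : Type*}

variable (G) in
def IsInvariantSubmodule [Semiring K] [AddCommMonoid X] [Module K X] [SMul G X]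
    (p : Submodule K X) : Prop :=
  ∀ a : G, ∀ v ∈ p, a • v ∈ p

section Monoid

variable [Semiring K] [AddCommMonoid X] [Module K X] [Monoid G] [DistribMulAction G X]

theorem isInvariantSubmodule_bot : IsInvariantSubmodule G (⊥ : Submodule K X) := by
  intro a v hv
  rw [mem_bot] at hv ⊢
  rw [hv, smul_zero]

theorem IsInvariantSubmodule.sup {p q : Submodule K X} (hp : IsInvariantSubmodule G p)
    (hq : IsInvariantSubmodule G q) : IsInvariantSubmodule G (p ⊔ q) := by
  intro a v hv
  obtain ⟨y, hy, z, hz, rfl⟩ := mem_sup.1 hv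
  exact mem_sup.2 ⟨a • y, hp a y hy, a • z, hq a z hz, (smul_add a y z).symm⟩

end Monoid

variable [DivisionRing K] [AddCommGroup X] [Module K X] [Group G] [DistribMulAction G X]
  [SMulCommClass G K X]

theorem smul_submodule_eq_self_of_forall_smul_mem {p : Submodule K X} [FiniteDimensional K p]
    {a : G} (ha : ∀ v ∈ p, a • v ∈ p) : a • p = p := by
  refine eq_of_le_of_finrank_eq ?_ ((DistribMulAction.toLinearEquiv K X a).finrank_map_eq p)
  rintro _ ⟨v, hv, rfl⟩
  exact ha v hv

theorem isInvariantSubmodule_of_closure_eq_top {S : Set G} (hS : Subgroup.closure S = ⊤)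
    {p : Submodule K X} [FiniteDimensional K p] (hp : ∀ s ∈ S, ∀ v ∈ p, s • v ∈ p) :
    IsInvariantSubmodule G p := by
  intro a v hv
  have ha : a ∈ MulAction.stabilizer G p :=
    (Subgroup.closure_le _).2 (fun s hs => smul_submodule_eq_self_of_forall_smul_mem (hp s hs))
      (hS ▸ Subgroup.mem_top a)
  rw [← MulAction.mem_stabilizer_iff.1 ha]
  exact smul_mem_pointwise_smul v a p hv

end Invariant

section LocallyFinitePart

variable (K G X : Type*) [DivisionRing K] [AddCommGroup X] [Module K X] [Monoid G]
  [DistribMulAction G X]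

def finiteInvariantSubmodules : Set (Submodule K X) :=
  {p | FiniteDimensional K p ∧ IsInvariantSubmodule G p}

def locallyFinitePart : Submodule K X :=
  sSup (finiteInvariantSubmodules K G X)

variable {K G X}

theorem bot_mem_finiteInvariantSubmodules : ⊥ ∈ finiteInvariantSubmodules K G X :=
  ⟨inferInstance, isInvariantSubmodule_bot⟩

theorem supClosed_finiteInvariantSubmodules : SupClosed (finiteInvariantSubmodules K G X) :=
  fun _ ⟨_, hp⟩ _ ⟨_, hq⟩ => ⟨inferInstance, hp.sup hq⟩

theorem le_locallyFinitePart {p : Submodule K X} (hp : p ∈ finiteInvariantSubmodules K G X) :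
    p ≤ locallyFinitePart K G X :=
  le_sSup hp

theorem mem_locallyFinitePart {v : X} :
    v ∈ locallyFinitePart K G X ↔ ∃ p ∈ finiteInvariantSubmodules K G X, v ∈ p :=
  mem_sSup_of_directed ⟨⊥, bot_mem_finiteInvariantSubmodules⟩
    supClosed_finiteInvariantSubmodules.directedOn

theorem exists_mem_sup_of_mem_sup_locallyFinitePart {N : Submodule K X} {v : X}
    (hv : v ∈ N ⊔ locallyFinitePart K G X) :
    ∃ p ∈ finiteInvariantSubmodules K G X, v ∈ N ⊔ p := by
  obtain ⟨n, hn, w, hw, rfl⟩ := mem_sup.1 hv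
  obtain ⟨p, hp, hwp⟩ := mem_locallyFinitePart.1 hw
  exact ⟨p, hp, mem_sup.2 ⟨n, hn, w, hwp, rfl⟩⟩

end LocallyFinitePart

theorem exists_finset_forall_mem_span_image_sup {K X ι : Type*} [DivisionRing K] [AddCommGroup X]
    [Module K X] {v : ι → X} {L I : Submodule K X} [FiniteDimensional K L]
    (hv : ∀ i, v i ∈ L ⊔ I) : ∃ s : Finset ι, ∀ i, v i ∈ span K (v '' s) ⊔ I := by
  set π := I.mkQ
  have hle : span K (Set.range (π ∘ v)) ≤ L.map π := by
    refine span_le.2 ?_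
    rintro _ ⟨i, rfl⟩
    simpa [Submodule.map_sup, π] using mem_map_of_mem (f := π) (hv i)
  have hcompact : IsCompactElement (span K (Set.range (π ∘ v))) :=
    (fg_iff_compact _).1 ((fg_iff_finiteDimensional _).2 (finiteDimensional_of_le hle))
  rw [span_range_eq_iSup] at hcompact
  obtain ⟨s, hs⟩ :=
    CompleteLattice.IsCompactElement.exists_finset_of_le_iSup _ hcompact _ le_rfl
  refine ⟨s, fun i => ?_⟩
  rw [sup_comm, ← comap_map_mkQ, mem_comap]
  refine hs.trans (iSup₂_le fun j hj => ?_) (mem_iSup_of_mem i (mem_span_singleton_self _))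
  exact span_singleton_le_iff_mem _ _ |>.2 (mem_map_of_mem (subset_span ⟨j, hj, rfl⟩))

theorem exists_finiteInvariantSubmodule_span_le {K G X : Type*} [DivisionRing K] [AddCommGroup X]
    [Module K X] [Group G] [DistribMulAction G X] [SMulCommClass G K X] {S : Finset G}
    (hS : Subgroup.closure (S : Set G) = ⊤) {T : Finset X}
    (hT : ∀ s ∈ S, ∀ t ∈ T, s • t ∈ span K T ⊔ locallyFinitePart K G X) :
    ∃ p ∈ finiteInvariantSubmodules K G X, span K T ≤ p := by
  choose! R hR hmem using fun s (hs : s ∈ S) t (ht : t ∈ T) =>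
    exists_mem_sup_of_mem_sup_locallyFinitePart (hT s hs t ht)
  set Rsum := (S ×ˢ T).sup fun st => R st.1 st.2
  obtain ⟨hRsum, hRsum_inv⟩ : Rsum ∈ finiteInvariantSubmodules K G X :=
    Finset.sup_mem _ bot_mem_finiteInvariantSubmodules supClosed_finiteInvariantSubmodules _ _
      fun st hst => hR st.1 (Finset.mem_product.1 hst).1 st.2 (Finset.mem_product.1 hst).2
  have hstable : ∀ s ∈ S, ∀ v ∈ span K T ⊔ Rsum, s • v ∈ span K T ⊔ Rsum := by
    intro s hs v hv
    refine (sup_le ?_ ?_ :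
      span K T ⊔ Rsum ≤ (span K T ⊔ Rsum).comap (DistribSMul.toLinearMap K X s)) hv
    · refine span_le.2 fun t ht => ?_
      have hRle : R s t ≤ Rsum :=
        Finset.le_sup (f := fun st => R st.1 st.2) (Finset.mk_mem_product hs ht)
      exact sup_le_sup_left hRle _ (hmem s hs t ht)
    · exact fun r hr => mem_sup_right (hRsum_inv s r hr)
  exact ⟨_, ⟨inferInstance, isInvariantSubmodule_of_closure_eq_top hS hstable⟩, le_sup_left⟩

theorem stmt15_general {G : Type*} [Group G] {X : Type*} [AddCommGroup X] [Module ℂ X]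
    [DistribMulAction G X] [SMulCommClass G ℂ X]
    (S : Finset G) (hgen : Subgroup.closure (S : Set G) = ⊤)
    (x : X) (L : Submodule ℂ X) (hL : FiniteDimensional ℂ L)
    (hall : ∀ g : G,
      ∃ R : Submodule ℂ X, FiniteDimensional ℂ R ∧
        (∀ a : G, ∀ v ∈ R, a • v ∈ R) ∧ g • x ∈ L ⊔ R) :
    ∃ V : Submodule ℂ X, FiniteDimensional ℂ V ∧
      (∀ a : G, ∀ v ∈ V, a • v ∈ V) ∧ x ∈ V := by
  classical
  have horbit : ∀ g : G, g • x ∈ L ⊔ locallyFinitePart ℂ G X := fun g => by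
    obtain ⟨R, hR, hR_inv, hg⟩ := hall g
    exact sup_le_sup_left (le_locallyFinitePart ⟨hR, hR_inv⟩) L hg
  obtain ⟨F, hF⟩ := exists_finset_forall_mem_span_image_sup horbit
  set T := (insert 1 F).image (· • x)
  have hT : ∀ g : G, g • x ∈ span ℂ T ⊔ locallyFinitePart ℂ G X := fun g =>
    have hFT : span ℂ ((· • x) '' (F : Set G)) ≤ span ℂ T := span_mono <| by
      rw [Finset.coe_image, Finset.coe_insert]
      exact Set.image_mono (Set.subset_insert _ _)
    sup_le_sup_right hFT _ (hF g)
  obtain ⟨V, ⟨hV, hV_inv⟩, hTV⟩ := exists_finiteInvariantSubmodule_span_le hgen (T := T) (by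
    intro s _ t ht
    obtain ⟨g, -, rfl⟩ := Finset.mem_image.1 ht
    simpa only [smul_smul] using hT (s * g))
  have hxT : x ∈ T := Finset.mem_image.2 ⟨1, Finset.mem_insert_self _ _, one_smul G x⟩
  exact ⟨V, hV, hV_inv, hTV (subset_span hxT)⟩

theorem stmt15 {G : Type*} [Group G] {X : Type*} [AddCommGroup X] [Module ℂ X]
    [DistribMulAction G X] [SMulCommClass G ℂ X]
    (S : Finset G) (hgen : Subgroup.closure (S : Set G) = ⊤)
    (x : X) (L : Submodule ℂ X) (hL : FiniteDimensional ℂ L)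
    (hS : ∀ g : G, (g ∈ S ∨ g⁻¹ ∈ S) →
      ∃ R : Submodule ℂ X, FiniteDimensional ℂ R ∧
        (∀ a : G, ∀ v ∈ R, a • v ∈ R) ∧ g • x ∈ L ⊔ R)
    (hall : ∀ g : G,
      ∃ R : Submodule ℂ X, FiniteDimensional ℂ R ∧
        (∀ a : G, ∀ v ∈ R, a • v ∈ R) ∧ g • x ∈ L ⊔ R) :
    ∃ V : Submodule ℂ X, FiniteDimensional ℂ V ∧
      (∀ a : G, ∀ v ∈ V, a • v ∈ V) ∧ x ∈ V :=
  stmt15_general S hgen x L hL hall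
end

section
/- Let f₁, f₂ : ℝ → ℂ be continuous and c₁ ≠ c₂ nonzero reals. Suppose f₁(c₁(x+y)) + f₂(c₂(x+y)) = f₁(c₁x) + f₂(c₂x) + f₁(c₁y) + f₂(c₂y) for all x, y ∈ ℝ, and suppose moreover that f₁, f₂ satisfy the Skitovich–Darmois linearized system f₁(x + c y) + f₂(x + y) = g(x) + h(y) for all x, y ∈ ℝ, where c ≠ 1, c ≠ 0 and g, h : ℝ → ℂ. Then f₁ and f₂ are polynomials of degree at most 2. -/
lemma contAddLin (F : ℝ → ℂ) (hF : Continuous F) (hadd : ∀ x y, F (x+y) = F x + F y) :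
    ∀ t, F t = t * F 1 := by
  intro t
  let L : ℝ →+ ℂ := AddMonoidHom.mk' F hadd
  have hF' : Continuous L := hF
  have hL := (L.toRealLinearMap hF').map_smul t 1
  have h2 : L (t • (1:ℝ)) = t • L 1 := by
    simpa [AddMonoidHom.coe_toRealLinearMap] using hL
  have h3 : L (t • (1:ℝ)) = F t := by norm_num [L, AddMonoidHom.mk'_apply]
  have h4 : L 1 = F 1 := rfl
  rw [h3, h4] at h2
  simpa [Complex.real_smul] using h2

theorem stmt17 (f₁ f₂ g h : ℝ → ℂ) (hf₁ : Continuous f₁) (hf₂ : Continuous f₂)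
    (c₁ c₂ : ℝ) (hc₁ : c₁ ≠ 0) (hc₂ : c₂ ≠ 0) (hne : c₁ ≠ c₂)
    (c : ℝ) (hc0 : c ≠ 0) (hc1 : c ≠ 1)
    (hSD : ∀ x y : ℝ, f₁ (c₁ * (x + y)) + f₂ (c₂ * (x + y))
        = f₁ (c₁ * x) + f₂ (c₂ * x) + f₁ (c₁ * y) + f₂ (c₂ * y))
    (hW : ∀ x y : ℝ, f₁ (x + c * y) + f₂ (x + y) = g x + h y) :
    ∃ P₁ P₂ : Polynomial ℂ, P₁.natDegree ≤ 2 ∧ P₂.natDegree ≤ 2 ∧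
      (∀ x : ℝ, f₁ x = P₁.eval (x : ℂ)) ∧ (∀ x : ℝ, f₂ x = P₂.eval (x : ℂ)) := by
  -- Step 1: F(t) = f₁(c₁ t) + f₂(c₂ t) is additive and continuous, hence linear.
  set F : ℝ → ℂ := fun t => f₁ (c₁ * t) + f₂ (c₂ * t) with hFdef
  have hFc : Continuous F := ((hf₁.comp (continuous_const.mul continuous_id)).add
    (hf₂.comp (continuous_const.mul continuous_id)))
  have hFadd : ∀ x y, F (x + y) = F x + F y := by
    intro x y; simp only [F]; rw [hSD x y]; ring
  have hFlin : ∀ t, F t = t * F 1 := contAddLin F hFc hFadd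
  set a : ℂ := F 1 with ha
  -- Step 2: express f₂ in terms of f₁.
  set k : ℝ := c₁ / c₂ with hk
  have hk0 : k ≠ 0 := div_ne_zero hc₁ hc₂
  have hk1 : k ≠ 1 := by
    intro hcontra; exact hne ((div_eq_one_iff_eq hc₂).mp hcontra)
  have hf2eq : ∀ s : ℝ, f₂ s = (s / c₂ : ℝ) * a - f₁ (k * s) := by
    intro s
    have h1 : F (s / c₂) = (s / c₂ : ℝ) * a := hFlin _
    have h2 : c₂ * (s / c₂) = s := by field_simp
    have h3 : c₁ * (s / c₂) = k * s := by rw [hk]; ring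
    simp only [F, h2, h3] at h1
    linear_combination h1
  -- Step 3: four-point identity for f₁ from the Wilson equation
  have h4pt : ∀ x x' y y' : ℝ,
      f₁ (x + c*y) - f₁ (x' + c*y) - f₁ (x + c*y') + f₁ (x' + c*y')
      = f₁ (k*(x+y)) - f₁ (k*(x'+y)) - f₁ (k*(x+y')) + f₁ (k*(x'+y')) := by
    intro x x' y y'
    have e1 := hW x y; have e2 := hW x' y; have e3 := hW x y'; have e4 := hW x' y'
    rw [hf2eq (x+y)] at e1; rw [hf2eq (x'+y)] at e2
    rw [hf2eq (x+y')] at e3; rw [hf2eq (x'+y')] at e4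
    push_cast at e1 e2 e3 e4
    linear_combination e1 - e2 - e3 + e4
  -- Step 4: mixed second differences are base-independent
  have keyB : ∀ B s t : ℝ,
      f₁ (0 + s/k + c*t/k) - f₁ (0 + s/k) - f₁ (0 + c*t/k) + f₁ 0
      = f₁ (B + s + t) - f₁ (B + s) - f₁ (B + t) + f₁ B := by
    intro B s t
    set y' : ℝ := B/(k*(1-c)) with hy'
    have hc1' : (1:ℝ) - c ≠ 0 := sub_ne_zero.mpr (Ne.symm hc1)
    have e := h4pt (-(c*y') + s/k) (-(c*y')) (y' + t/k) y'
    rw [show -(c*y') + s/k + c*(y'+t/k) = 0 + s/k + c*t/k by ring] at e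
    rw [show -(c*y') + c*(y'+t/k) = 0 + c*t/k by ring] at e
    rw [show -(c*y') + s/k + c*y' = 0 + s/k by ring] at e
    rw [show -(c*y') + c*y' = 0 by ring] at e
    rw [show k*((-(c*y') + s/k) + (y'+t/k)) = B + s + t by
      rw [hy']; field_simp; ring] at e
    rw [show k*(-(c*y') + (y'+t/k)) = B + t by rw [hy']; field_simp; ring] at e
    rw [show k*((-(c*y') + s/k) + y') = B + s by rw [hy']; field_simp; ring] at e
    rw [show k*(-(c*y') + y') = B by rw [hy']; field_simp; ring] at e
    linear_combination e
  have key : ∀ B B' s t : ℝ,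
      f₁ (B + s + t) - f₁ (B + s) - f₁ (B + t) + f₁ B
      = f₁ (B' + s + t) - f₁ (B' + s) - f₁ (B' + t) + f₁ B' := by
    intro B B' s t
    exact (keyB B s t).symm.trans (keyB B' s t)
  -- Step 5: for each δ, u ↦ Δ²(0;u,δ) is additive, hence linear
  have hadd2 : ∀ δ u v : ℝ, f₁ (u+v+δ) - f₁ (u+v) - f₁ δ + f₁ 0
      = (f₁ (u+δ) - f₁ u - f₁ δ + f₁ 0) + (f₁ (v+δ) - f₁ v - f₁ δ + f₁ 0) := by
    intro δ u v
    have e := key v 0 u δ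
    simp only [zero_add] at e
    have A1 : f₁ (v+u+δ) = f₁ (u+v+δ) := congrArg f₁ (by ring)
    have A2 : f₁ (v+u) = f₁ (u+v) := congrArg f₁ (by ring)
    linear_combination e - A1 + A2
  set m : ℝ → ℂ := fun δ => f₁ (1+δ) - f₁ 1 - f₁ δ + f₁ 0 with hm
  have hpsi : ∀ δ u : ℝ, f₁ (u+δ) - f₁ u - f₁ δ + f₁ 0 = u * m δ := by
    intro δ u
    have hcont : Continuous (fun u : ℝ => f₁ (u+δ) - f₁ u - f₁ δ + f₁ 0) := by
      apply Continuous.add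
      · exact (hf₁.comp (continuous_id.add continuous_const)).sub hf₁ |>.sub continuous_const
      · exact continuous_const
    have := contAddLin _ hcont (fun u v => hadd2 δ u v) u
    simpa [hm] using this
  -- Step 6: m is additive and continuous, hence linear
  have hmadd : ∀ δ ε : ℝ, m (δ+ε) = m δ + m ε := by
    intro δ ε
    have e := hadd2 1 δ ε
    have A1 : f₁ (δ+ε+1) = f₁ (1+(δ+ε)) := congrArg f₁ (by ring)
    have A2 : f₁ (δ+1) = f₁ (1+δ) := congrArg f₁ (by ring)
    have A3 : f₁ (ε+1) = f₁ (1+ε) := congrArg f₁ (by ring)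
    simp only [hm]
    linear_combination e - A1 + A2 + A3
  have hmcont : Continuous m := by
    apply Continuous.add
    · exact (hf₁.comp (continuous_const.add continuous_id)).sub continuous_const |>.sub hf₁
    · exact continuous_const
  have hmlin : ∀ δ : ℝ, m δ = δ * m 1 := contAddLin m hmcont hmadd
  -- Step 7: f₁ minus its quadratic part is additive, hence linear
  set ψ : ℝ → ℂ := fun u => f₁ u - (m 1 / 2) * (u:ℂ)^2 - f₁ 0 with hψ
  have hψcont : Continuous ψ := by
    apply Continuous.sub
    · exact hf₁.sub (continuous_const.mul (Complex.continuous_ofReal.pow 2))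
    · exact continuous_const
  have hψadd : ∀ u v : ℝ, ψ (u+v) = ψ u + ψ v := by
    intro u v
    have h1 := hpsi v u
    have h2 := hmlin v
    simp only [hψ]
    push_cast
    linear_combination h1 + (u:ℂ) * h2
  have hψlin : ∀ u : ℝ, ψ u = u * ψ 1 := contAddLin ψ hψcont hψadd
  have hf₁eq : ∀ u : ℝ, f₁ u = (m 1 / 2) * (u:ℂ)^2 + (ψ 1) * u + f₁ 0 := by
    intro u
    have := hψlin u
    simp only [hψ] at this
    linear_combination this
  -- Step 8: assemble the polynomials
  refine ⟨Polynomial.C (m 1 / 2) * Polynomial.X^2 + Polynomial.C (ψ 1) * Polynomial.X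
      + Polynomial.C (f₁ 0),
    Polynomial.C (-(m 1 / 2) * (k:ℂ)^2) * Polynomial.X^2
      + Polynomial.C (a/(c₂:ℂ) - (k:ℂ) * ψ 1) * Polynomial.X + Polynomial.C (-(f₁ 0)),
    ?_, ?_, ?_, ?_⟩
  · compute_degree
  · compute_degree
  · intro x
    simp only [Polynomial.eval_add, Polynomial.eval_mul, Polynomial.eval_pow,
      Polynomial.eval_C, Polynomial.eval_X]
    linear_combination hf₁eq x
  · intro x
    have h1 := hf2eq x
    have h2 := hf₁eq (k*x)
    rw [h2] at h1
    simp only [Polynomial.eval_add, Polynomial.eval_mul, Polynomial.eval_pow,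
      Polynomial.eval_C, Polynomial.eval_X]
    push_cast at h1 ⊢
    linear_combination h1
end
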